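/- Let A be a unital C*-algebra generated by self-adjoint contractions T₁,…,Tₙ with the universal property that for every unital C*-algebra B and self-adjoint contractions x₁,…,xₙ ∈ B there is a unital *-homomorphism A → B sending T_i to x_i. Then for every noncommutative polynomial P ∈ ℂ⟨X₁,…,Xₙ⟩ and every ε > 0 there exists δ > 0 such that for every unital C*-algebra B and all self-adjoint x₁,…,xₙ ∈ B with ‖x_j‖ ≤ 1 + δ (1 ≤ j ≤ n), one has ‖P(x₁,…,xₙ)‖ < ‖P(T₁,…,Tₙ)‖ + ε. -/

import Mathlib

/-!
Rescale `x` to `y = x / (1 + δ)`. The `y j` are self-adjoint contractions, so the universal property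
gives a ⋆-homomorphism `φ` with `P(y) = φ (P(T))`, and ⋆-homomorphisms between C⋆-algebras are
contractive: `‖P(y)‖ ≤ ‖P(T)‖`. On the other hand, evaluation of a fixed noncommutative polynomial
is Lipschitz on tuples of norm at most `2`, with a constant that does not depend on the algebra, so
`‖P(x) - P(y)‖ = O(δ)`.
-/

open scoped ComplexOrder
open Matrix MeasureTheory Filter
open scoped ENNReal NNReal
universe u v
noncomputable section

/-! ### Self-adjoint matrices as a real Hilbert space with ⟪A,B⟫ = Re Tr(AB) -/

/-- The space of `k × k` complex matrices. -/
abbrev Mat (k : ℕ) : Type := Matrix (Fin k) (Fin k) ℂ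

/-- The operator norm of a `k × k` complex matrix (the norm of the induced operator on `ℓ²`). -/
def opNorm {k : ℕ} (M : Mat k) : ℝ := ‖Matrix.toEuclideanCLM (𝕜 := ℂ) M‖

/-- Self-adjoint `k × k` complex matrices, as a standalone type. -/
@[ext] structure SA (k : ℕ) : Type where
  val : Mat k
  isSA : star val = val

namespace SA
variable {k : ℕ}

lemma val_injective : Function.Injective (SA.val (k := k)) := by
  rintro ⟨a, _⟩ ⟨b, _⟩ h
  cases h; rfl

instance : Zero (SA k) := ⟨⟨0, star_zero _⟩⟩
instance : Add (SA k) := ⟨fun A B => ⟨A.val + B.val, by rw [star_add, A.isSA, B.isSA]⟩⟩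
instance : Neg (SA k) := ⟨fun A => ⟨-A.val, by rw [star_neg, A.isSA]⟩⟩
instance : Sub (SA k) := ⟨fun A B => ⟨A.val - B.val, by rw [star_sub, A.isSA, B.isSA]⟩⟩
instance : SMul ℕ (SA k) := ⟨fun n A => ⟨n • A.val, by rw [star_nsmul, A.isSA]⟩⟩
instance : SMul ℤ (SA k) := ⟨fun n A => ⟨n • A.val, by rw [star_zsmul, A.isSA]⟩⟩
instance : SMul ℝ (SA k) :=
  ⟨fun r A => ⟨r • A.val, by rw [star_smul, star_trivial, A.isSA]⟩⟩

instance : AddCommGroup (SA k) :=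
  val_injective.addCommGroup SA.val rfl (fun _ _ => rfl) (fun _ => rfl) (fun _ _ => rfl)
    (fun _ _ => rfl) (fun _ _ => rfl)

instance : Module ℝ (SA k) :=
  val_injective.module ℝ
    { toFun := SA.val, map_zero' := rfl, map_add' := fun _ _ => rfl } (fun _ _ => rfl)

lemma trace_sq (A : SA k) :
    Matrix.trace (A.val * A.val) = ((∑ i, ∑ j, Complex.normSq (A.val j i) : ℝ) : ℂ) := by
  have hA : A.valᴴ = A.val := A.isSA
  rw [show A.val * A.val = A.valᴴ * A.val by rw [hA]]
  push_cast
  simp [Matrix.trace, Matrix.diag, Matrix.mul_apply, Matrix.conjTranspose_apply,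
    Complex.star_def, ← Complex.normSq_eq_conj_mul_self]

/-- The real inner product ⟪A,B⟫ = Re Tr(AB) on self-adjoint matrices. -/
def core (k : ℕ) : InnerProductSpace.Core ℝ (SA k) where
  inner A B := (Matrix.trace (A.val * B.val)).re
  conj_inner_symm A B := by simp [Matrix.trace_mul_comm A.val B.val]
  re_inner_nonneg A := by
    show (0:ℝ) ≤ (Matrix.trace (A.val * A.val)).re
    rw [trace_sq]
    simp only [Complex.ofReal_re]
    exact Finset.sum_nonneg fun i _ => Finset.sum_nonneg fun j _ => Complex.normSq_nonneg _
  definite A := by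
    intro h
    have h2 : (Matrix.trace (A.val * A.val)).re = 0 := h
    rw [trace_sq] at h2
    simp only [Complex.ofReal_re] at h2
    have hz := (Finset.sum_eq_zero_iff_of_nonneg (fun i _ => Finset.sum_nonneg
      (fun j _ => Complex.normSq_nonneg (A.val j i)))).mp h2
    have : A.val = 0 := by
      ext i j
      have := (Finset.sum_eq_zero_iff_of_nonneg
        (fun l _ => Complex.normSq_nonneg (A.val l j))).mp (hz j (Finset.mem_univ j)) i
        (Finset.mem_univ i)
      simpa [Complex.normSq_eq_zero] using this
    exact val_injective this
  add_left A B C := by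
    show (Matrix.trace ((A.val + B.val) * C.val)).re = _
    simp [add_mul, Matrix.trace_add]
  smul_left A B r := by
    show (Matrix.trace ((r • A.val) * B.val)).re = _
    simp [smul_mul_assoc, Matrix.trace_smul]

instance : NormedAddCommGroup (SA k) := (core k).toNormedAddCommGroup
instance : InnerProductSpace ℝ (SA k) := InnerProductSpace.ofCore (core k).toCore
instance : MeasurableSpace (SA k) := borel _
instance : BorelSpace (SA k) := ⟨rfl⟩
instance : FiniteDimensional ℝ (SA k) :=
  FiniteDimensional.of_injective
    ({ toFun := SA.val, map_add' := fun _ _ => rfl,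
       map_smul' := fun _ _ => rfl } : SA k →ₗ[ℝ] Mat k)
    val_injective





end SA
/-! ### Noncommutative polynomials -/

/-- Noncommutative polynomials with complex coefficients in `N` indeterminates. -/
abbrev NCPoly (N : ℕ) : Type := FreeAlgebra ℂ (Fin N)

/-- Evaluation of a noncommutative polynomial at an `N`-tuple of elements of a
unital complex algebra. -/
def NCPoly.eval {N : ℕ} {B : Type*} [Ring B] [Algebra ℂ B] (P : NCPoly N) (x : Fin N → B) : B :=
  FreeAlgebra.lift ℂ x P

/-- The ordered product `x (w 0) * x (w 1) * ⋯ * x (w (p-1))` of the word `w`. -/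
def wordProd {B : Type*} [Monoid B] {N : ℕ} (x : Fin N → B) {p : ℕ} (w : Fin p → Fin N) : B :=
  (List.ofFn fun i => x (w i)).prod

/-! ### Tracial states -/

section TracialState
variable {A : Type*} [Ring A] [Module ℂ A] [StarRing A]

/-- A tracial state on a unital complex ⋆-algebra: a linear functional `τ` with `τ 1 = 1`,
`τ (x⋆ x) ≥ 0` and `τ (x y) = τ (y x)`. -/
structure IsTracialState (τ : A →ₗ[ℂ] ℂ) : Prop where
  map_one : τ 1 = 1
  nonneg : ∀ x : A, 0 ≤ τ (star x * x)
  mul_comm : ∀ x y : A, τ (x * y) = τ (y * x)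

end TracialState

/-! ### Voiculescu's microstates free entropy and free capacity -/

section FreeEntropy
variable {A : Type*} [Ring A] [Module ℂ A] [StarRing A] {n m : ℕ}

/-- The matricial microstates `Γ_R(a₁,…,aₙ,b₁,…,bₘ; k, l, ε; τ)`: tuples of self-adjoint
`k × k` matrices of operator norm at most `R` such that the normalized trace of every word of
length between `1` and `l` differs by at most `ε` from the corresponding `τ`-moment. -/
def GammaR (R : ℝ) (a : Fin n → A) (b : Fin m → A) (τ : A →ₗ[ℂ] ℂ) (k l : ℕ) (ε : ℝ) :
    Set ((Fin n → SA k) × (Fin m → SA k)) :=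
  {CD | (∀ i, opNorm (CD.1 i).val ≤ R) ∧ (∀ j, opNorm (CD.2 j).val ≤ R) ∧
    ∀ (p : ℕ), 1 ≤ p → p ≤ l → ∀ w : Fin p → Fin (n + m),
      ‖(k : ℂ)⁻¹ *
          Matrix.trace (wordProd (Fin.append (fun i => (CD.1 i).val) fun j => (CD.2 j).val) w)
        - τ (wordProd (Fin.append a b) w)‖ ≤ ε}

/-- The microstates for `a₁,…,aₙ` in the presence of `b₁,…,bₘ`: the projection of
`Γ_R(a₁,…,aₙ,b₁,…,bₘ; k, l, ε; τ)` on the first `n` coordinates. -/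
def GammaRPres (R : ℝ) (a : Fin n → A) (b : Fin m → A) (τ : A →ₗ[ℂ] ℂ) (k l : ℕ) (ε : ℝ) :
    Set (Fin n → SA k) :=
  Prod.fst '' GammaR R a b τ k l ε

/-- Voiculescu's microstates free entropy `χ(a₁,…,aₙ : b₁,…,bₘ; τ)` of `a₁,…,aₙ` in the
presence of `b₁,…,bₘ`, with respect to the tracial state `τ`. -/
def chiPres (a : Fin n → A) (b : Fin m → A) (τ : A →ₗ[ℂ] ℂ) : EReal :=
  ⨆ (R : ℝ) (_ : 0 < R), ⨅ (l : ℕ) (ε : ℝ) (_ : 0 < ε),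
    Filter.atTop.limsup fun k : ℕ =>
      (↑(((k : ℝ) ^ 2)⁻¹) : EReal) * ENNReal.log (volume (GammaRPres R a b τ k l ε))
        + (↑((n : ℝ) / 2 * Real.log k) : EReal)

/-- Voiculescu's microstates free entropy `χ(a₁,…,aₙ; τ)`. -/
def chi (a : Fin n → A) (τ : A →ₗ[ℂ] ℂ) : EReal :=
  chiPres a (fun i : Fin 0 => i.elim0) τ

/-- The free capacity `κ(a₁,…,aₙ : b₁,…,bₘ)` of `a₁,…,aₙ` in the presence of `b₁,…,bₘ`:
the supremum of `χ(a₁,…,aₙ : b₁,…,bₘ; τ)` over all tracial states `τ` of the ambient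
algebra. -/
def kappaPres (a : Fin n → A) (b : Fin m → A) : EReal :=
  ⨆ (τ : A →ₗ[ℂ] ℂ) (_ : IsTracialState τ), chiPres a b τ

/-- The free capacity `κ(a₁,…,aₙ)`. -/
def kappa (a : Fin n → A) : EReal :=
  ⨆ (τ : A →ₗ[ℂ] ℂ) (_ : IsTracialState τ), chi a τ

end FreeEntropy

/-! ### Topological free entropy -/

section TopEntropy
variable {A : Type*} [NormedRing A] [NormedAlgebra ℂ A] [StarRing A] {n m : ℕ}

/-- The norm-microstates `Γ_top(a₁,…,aₙ,b₁,…,bₘ; k, ε, P₁,…,P_r)`: tuples of self-adjoint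
`k × k` matrices on which each of the noncommutative polynomials `P j` has operator norm
`ε`-close to its norm at `(a, b)`. -/
def GammaTop (a : Fin n → A) (b : Fin m → A) (k : ℕ) (ε : ℝ) {r : ℕ}
    (P : Fin r → NCPoly (n + m)) : Set ((Fin n → SA k) × (Fin m → SA k)) :=
  {CD | ∀ j : Fin r,
    |opNorm ((P j).eval (Fin.append (fun i => (CD.1 i).val) fun i => (CD.2 i).val))
      - ‖(P j).eval (Fin.append a b)‖| ≤ ε}

/-- Norm-microstates of `a₁,…,aₙ` in the presence of `b₁,…,bₘ`: the projection of
`Γ_top(a₁,…,aₙ,b₁,…,bₘ; k, ε, P₁,…,P_r)` on the first `n` coordinates. -/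
def GammaTopPres (a : Fin n → A) (b : Fin m → A) (k : ℕ) (ε : ℝ) {r : ℕ}
    (P : Fin r → NCPoly (n + m)) : Set (Fin n → SA k) :=
  Prod.fst '' GammaTop a b k ε P

/-- The topological free entropy `χ_top(a₁,…,aₙ : b₁,…,bₘ)` of `a₁,…,aₙ` in the presence
of `b₁,…,bₘ`. -/
def chiTopPres (a : Fin n → A) (b : Fin m → A) : EReal :=
  ⨅ (ε : ℝ) (_ : 0 < ε) (r : ℕ) (P : Fin r → NCPoly (n + m)),
    Filter.atTop.limsup fun k : ℕ =>
      (↑(((k : ℝ) ^ 2)⁻¹) : EReal) * ENNReal.log (volume (GammaTopPres a b k ε P))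
        + (↑((n : ℝ) / 2 * Real.log k) : EReal)

/-- The topological free entropy `χ_top(a₁,…,aₙ)`. -/
def chiTop (a : Fin n → A) : EReal :=
  chiTopPres a (fun i : Fin 0 => i.elim0)

end TopEntropy
/-! ### Topological free entropy dimension -/

/-- The minimal number of elements of an `ε`-net of `X` for the distance function `d`
(`⊤` if there is no finite `ε`-net). -/
def coveringNumber {α : Type*} (d : α → α → ℝ) (ε : ℝ) (X : Set α) : ℕ∞ :=
  ⨅ (S : Finset α) (_ : ∀ x ∈ X, ∃ s ∈ S, d x s ≤ ε), (S.card : ℕ∞)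

/-- The metric on `n`-tuples of `k × k` matrices given by the maximum of the operator norms
of the differences of the coordinates. -/
def opDist {n k : ℕ} (x y : Fin n → Mat k) : ℝ := ⨆ i, opNorm (x i - y i)

/-- The normalized Hilbert–Schmidt metric
`|(A₁,…,Aₙ)|₂ = k^{-1/2} (Σ_j Tr(A_j²))^{1/2}` on `n`-tuples of `k × k` matrices,
applied to differences. -/
def hsDist {n k : ℕ} (x y : Fin n → Mat k) : ℝ :=
  Real.sqrt ((k : ℝ)⁻¹ * (∑ j, Matrix.trace ((x j - y j) * (x j - y j))).re)

section TopDim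
variable {A : Type*} [NormedRing A] [NormedAlgebra ℂ A] [StarRing A] {n m : ℕ}

/-- The norm-microstates of `a₁,…,aₙ` in the presence of `b₁,…,bₘ`, viewed as a subset of
`(M_k)ⁿ`. -/
def GammaTopPresMat (a : Fin n → A) (b : Fin m → A) (k : ℕ) (ε : ℝ) {r : ℕ}
    (P : Fin r → NCPoly (n + m)) : Set (Fin n → Mat k) :=
  (fun C : Fin n → SA k => fun i => (C i).val) '' GammaTopPres a b k ε P

/-- `D_ε(a₁,…,aₙ : b₁,…,bₘ)`, computed with respect to the family of metrics `d` on tuples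
of matrices. -/
def DepsWith (d : ∀ k : ℕ, (Fin n → Mat k) → (Fin n → Mat k) → ℝ)
    (a : Fin n → A) (b : Fin m → A) (ε : ℝ) : EReal :=
  ⨅ (r : ℕ) (P : Fin r → NCPoly (n + m)),
    Filter.atTop.limsup fun k : ℕ =>
      (↑(((k : ℝ) ^ 2)⁻¹) : EReal) *
        ENNReal.log ((coveringNumber (d k) ε (GammaTopPresMat a b k ε P) : ℕ∞) : ℝ≥0∞)

/-- The topological free entropy dimension computed with respect to the family of metrics
`d` on tuples of matrices: `limsup_{ε→0⁺} D_ε / |log ε|`. -/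
def deltaTopWith (d : ∀ k : ℕ, (Fin n → Mat k) → (Fin n → Mat k) → ℝ)
    (a : Fin n → A) (b : Fin m → A) : EReal :=
  Filter.limsup (fun ε : ℝ => (↑|Real.log ε|⁻¹ : EReal) * DepsWith d a b ε)
    (nhdsWithin 0 (Set.Ioi 0))

/-- The topological free entropy dimension `δ_top(a₁,…,aₙ : b₁,…,bₘ)` (for the operator-norm
metric on tuples of matrices). -/
def deltaTopPres (a : Fin n → A) (b : Fin m → A) : EReal :=
  deltaTopWith (fun _ => opDist) a b

/-- The topological free entropy dimension `δ_top(a₁,…,aₙ)`. -/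
def deltaTop (a : Fin n → A) : EReal :=
  deltaTopPres a (fun i : Fin 0 => i.elim0)

/-! ### Semi-microstates -/

/-- The norm-semi-microstates `Γ_top½(a₁,…,aₙ,b₁,…,bₘ; k, ε, P₁,…,P_r)`: only the one-sided
inequalities `‖P_j(C,D)‖ ≤ ‖P_j(a,b)‖ + ε` are required. -/
def GammaTopHalf (a : Fin n → A) (b : Fin m → A) (k : ℕ) (ε : ℝ) {r : ℕ}
    (P : Fin r → NCPoly (n + m)) : Set ((Fin n → SA k) × (Fin m → SA k)) :=
  {CD | ∀ j : Fin r,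
    opNorm ((P j).eval (Fin.append (fun i => (CD.1 i).val) fun i => (CD.2 i).val))
      ≤ ‖(P j).eval (Fin.append a b)‖ + ε}

/-- Norm-semi-microstates of `a₁,…,aₙ` in the presence of `b₁,…,bₘ`. -/
def GammaTopHalfPres (a : Fin n → A) (b : Fin m → A) (k : ℕ) (ε : ℝ) {r : ℕ}
    (P : Fin r → NCPoly (n + m)) : Set (Fin n → SA k) :=
  Prod.fst '' GammaTopHalf a b k ε P

/-- The topological free entropy `χ_top½(a₁,…,aₙ : b₁,…,bₘ)` defined via
norm-semi-microstates. -/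
def chiTopHalfPres (a : Fin n → A) (b : Fin m → A) : EReal :=
  ⨅ (ε : ℝ) (_ : 0 < ε) (r : ℕ) (P : Fin r → NCPoly (n + m)),
    Filter.atTop.limsup fun k : ℕ =>
      (↑(((k : ℝ) ^ 2)⁻¹) : EReal) * ENNReal.log (volume (GammaTopHalfPres a b k ε P))
        + (↑((n : ℝ) / 2 * Real.log k) : EReal)

end TopDim

theorem CStarRing.norm_one_le {B : Type*} [NormedRing B] [StarRing B] [CStarRing B] :
    ‖(1 : B)‖ ≤ 1 := by
  have h := CStarRing.norm_star_mul_self (x := (1 : B))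
  rw [star_one, one_mul] at h
  nlinarith [norm_nonneg (1 : B)]

theorem StarAlgHom.norm_apply_le_of_cstarRing {A B : Type*}
    [NormedRing A] [NormedAlgebra ℂ A] [StarRing A] [CStarRing A] [CompleteSpace A]
    [StarModule ℂ A]
    [NormedRing B] [NormedAlgebra ℂ B] [StarRing B] [CStarRing B] [CompleteSpace B]
    [StarModule ℂ B] (φ : A →⋆ₐ[ℂ] B) (a : A) : ‖φ a‖ ≤ ‖a‖ := by
  let _ : CStarAlgebra A := {}
  let _ : CStarAlgebra B := {}
  exact NonUnitalStarAlgHom.norm_apply_le φ a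

theorem NCPoly.eval_algHom_apply {N : ℕ} {A B : Type*} [Ring A] [Algebra ℂ A] [Ring B]
    [Algebra ℂ B] (f : A →ₐ[ℂ] B) (P : NCPoly N) (x : Fin N → A) :
    P.eval (f ∘ x) = f (P.eval x) := by
  have : FreeAlgebra.lift ℂ (f ∘ x) = f.comp (FreeAlgebra.lift ℂ x) := by
    ext i
    simp
  exact DFunLike.congr_fun this P

namespace FreeAlgebra

universe w

variable {𝕜 : Type*} [NormedField 𝕜] {ι : Type*}

theorem exists_norm_lift_le (P : FreeAlgebra 𝕜 ι) (r : ℝ) :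
    ∃ M : ℝ, ∀ {B : Type w} [NormedRing B] [NormedAlgebra 𝕜 B], ‖(1 : B)‖ ≤ 1 →
      ∀ x : ι → B, (∀ i, ‖x i‖ ≤ r) → ‖lift 𝕜 x P‖ ≤ M := by
  induction P using FreeAlgebra.induction with
  | grade0 c =>
    refine ⟨‖c‖, fun h1 x _ => ?_⟩
    rw [AlgHom.commutes, norm_algebraMap]
    exact mul_le_of_le_one_right (norm_nonneg c) h1
  | grade1 i => exact ⟨r, fun _ x hx => by simpa using hx i⟩
  | mul p q hp hq =>
    obtain ⟨Mp, hMp⟩ := hp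
    obtain ⟨Mq, hMq⟩ := hq
    refine ⟨Mp * Mq, fun h1 x hx => ?_⟩
    rw [map_mul]
    have hp_x := hMp h1 x hx
    exact (norm_mul_le _ _).trans
      (mul_le_mul hp_x (hMq h1 x hx) (norm_nonneg _) ((norm_nonneg _).trans hp_x))
  | add p q hp hq =>
    obtain ⟨Mp, hMp⟩ := hp
    obtain ⟨Mq, hMq⟩ := hq
    refine ⟨Mp + Mq, fun h1 x hx => ?_⟩
    rw [map_add]
    exact (norm_add_le _ _).trans (add_le_add (hMp h1 x hx) (hMq h1 x hx))

theorem exists_norm_lift_sub_lift_le (P : FreeAlgebra 𝕜 ι) (r : ℝ) :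
    ∃ L : ℝ, ∀ {B : Type w} [NormedRing B] [NormedAlgebra 𝕜 B], ‖(1 : B)‖ ≤ 1 →
      ∀ x y : ι → B, (∀ i, ‖x i‖ ≤ r) → (∀ i, ‖y i‖ ≤ r) →
      ∀ η : ℝ, (∀ i, ‖x i - y i‖ ≤ η) → ‖lift 𝕜 x P - lift 𝕜 y P‖ ≤ L * η := by
  induction P using FreeAlgebra.induction with
  | grade0 c => exact ⟨0, fun _ x y _ _ η _ => by simp⟩
  | grade1 i => exact ⟨1, fun _ x y _ _ η hxy => by simpa using hxy i⟩
  | mul p q hp hq =>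
    obtain ⟨Lp, hLp⟩ := hp
    obtain ⟨Lq, hLq⟩ := hq
    obtain ⟨Mp, hMp⟩ := exists_norm_lift_le.{w} p r
    obtain ⟨Mq, hMq⟩ := exists_norm_lift_le.{w} q r
    refine ⟨Mp * Lq + Lp * Mq, ?_⟩
    intro B _ _ h1 x y hx hy η hxy
    have hp_sub := hLp h1 x y hx hy η hxy
    have hq_sub := hLq h1 x y hx hy η hxy
    have hp_x := hMp h1 x hx
    have hq_y := hMq h1 y hy
    rw [map_mul, map_mul, show ∀ a b a' b' : B, a * b - a' * b' = a * (b - b') + (a - a') * b'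
      from fun _ _ _ _ => by noncomm_ring]
    calc _ ≤ ‖lift 𝕜 x p‖ * ‖lift 𝕜 x q - lift 𝕜 y q‖
          + ‖lift 𝕜 x p - lift 𝕜 y p‖ * ‖lift 𝕜 y q‖ :=
          (norm_add_le _ _).trans (add_le_add (norm_mul_le _ _) (norm_mul_le _ _))
      _ ≤ Mp * (Lq * η) + (Lp * η) * Mq :=
          add_le_add (mul_le_mul hp_x hq_sub (norm_nonneg _) ((norm_nonneg _).trans hp_x))
            (mul_le_mul hp_sub hq_y (norm_nonneg _) ((norm_nonneg _).trans hp_sub))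
      _ = (Mp * Lq + Lp * Mq) * η := by ring
  | add p q hp hq =>
    obtain ⟨Lp, hLp⟩ := hp
    obtain ⟨Lq, hLq⟩ := hq
    refine ⟨Lp + Lq, fun h1 x y hx hy η hxy => ?_⟩
    rw [map_add, map_add, add_sub_add_comm]
    calc _ ≤ Lp * η + Lq * η :=
          (norm_add_le _ _).trans (add_le_add (hLp h1 x y hx hy η hxy) (hLq h1 x y hx hy η hxy))
      _ = (Lp + Lq) * η := by ring

end FreeAlgebra

section Rescaling

variable {E : Type*} [SeminormedAddCommGroup E] [NormedSpace ℂ E] {a : E} {δ : ℝ}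

theorem norm_inv_one_add_smul_le_one (hδ : 0 ≤ δ) (ha : ‖a‖ ≤ 1 + δ) :
    ‖(((1 + δ)⁻¹ : ℝ) : ℂ) • a‖ ≤ 1 := by
  rw [norm_smul, Complex.norm_real, Real.norm_of_nonneg (by positivity)]
  calc (1 + δ)⁻¹ * ‖a‖ ≤ (1 + δ)⁻¹ * (1 + δ) := by gcongr
    _ = 1 := inv_mul_cancel₀ (by positivity)

theorem norm_sub_inv_one_add_smul_le (hδ : 0 ≤ δ) (ha : ‖a‖ ≤ 1 + δ) :
    ‖a - (((1 + δ)⁻¹ : ℝ) : ℂ) • a‖ ≤ δ := by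
  have hcoef : 1 - (1 + δ)⁻¹ = δ * (1 + δ)⁻¹ := by field_simp; ring
  have hcoef_nonneg : 0 ≤ 1 - (1 + δ)⁻¹ := by rw [hcoef]; positivity
  calc ‖a - (((1 + δ)⁻¹ : ℝ) : ℂ) • a‖ = (1 - (1 + δ)⁻¹) * ‖a‖ := by
        rw [← one_smul ℂ a, smul_smul, mul_one, ← sub_smul, norm_smul, one_smul,
          ← Complex.ofReal_one, ← Complex.ofReal_sub, Complex.norm_real,
          Real.norm_of_nonneg hcoef_nonneg]
    _ ≤ (1 - (1 + δ)⁻¹) * (1 + δ) := by gcongr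
    _ = δ := by rw [hcoef, mul_assoc, inv_mul_cancel₀ (by positivity), mul_one]

end Rescaling

theorem universal_contractions_norm_bound_general {A : Type u} [NormedRing A] [NormedAlgebra ℂ A]
    [StarRing A] [CStarRing A] [CompleteSpace A] [StarModule ℂ A] {n : ℕ}
    (T : Fin n → A)
    (huniv : ∀ (B : Type v) [NormedRing B] [NormedAlgebra ℂ B] [StarRing B] [CStarRing B]
      [CompleteSpace B] [StarModule ℂ B] (x : Fin n → B),
      (∀ i, IsSelfAdjoint (x i)) → (∀ i, ‖x i‖ ≤ 1) →
      ∃ φ : A →⋆ₐ[ℂ] B, ∀ i, φ (T i) = x i) :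
    ∀ (P : NCPoly n) (ε : ℝ), 0 < ε → ∃ δ : ℝ, 0 < δ ∧
      ∀ (B : Type v) [NormedRing B] [NormedAlgebra ℂ B] [StarRing B] [CStarRing B]
        [CompleteSpace B] [StarModule ℂ B] (x : Fin n → B),
        (∀ j, IsSelfAdjoint (x j)) → (∀ j, ‖x j‖ ≤ 1 + δ) →
        ‖P.eval x‖ < ‖P.eval T‖ + ε := by
  intro P ε hε
  obtain ⟨L, hL⟩ := FreeAlgebra.exists_norm_lift_sub_lift_le.{v} P 2
  obtain ⟨δ, hδ, hLδ⟩ := exists_pos_mul_lt hε (max L 0)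
  refine ⟨min δ 1, lt_min hδ one_pos, fun B _ _ _ _ _ _ x hx_sa hx_norm => ?_⟩
  have hs : 0 ≤ min δ 1 := (lt_min hδ one_pos).le
  let y : Fin n → B := fun j => (((1 + min δ 1)⁻¹ : ℝ) : ℂ) • x j
  have hy_norm (j : Fin n) : ‖y j‖ ≤ 1 := norm_inv_one_add_smul_le_one hs (hx_norm j)
  have hy_sa (j : Fin n) : IsSelfAdjoint (y j) :=
    IsSelfAdjoint.smul (Complex.conj_ofReal _) (hx_sa j)
  obtain ⟨φ, hφ⟩ := huniv B y hy_sa hy_norm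
  have hPy : ‖P.eval y‖ ≤ ‖P.eval T‖ := by
    rw [show y = φ.toAlgHom ∘ T from funext fun i => (hφ i).symm, NCPoly.eval_algHom_apply]
    exact StarAlgHom.norm_apply_le_of_cstarRing φ _
  have hPxy : ‖P.eval x - P.eval y‖ ≤ L * min δ 1 :=
    hL CStarRing.norm_one_le x y (fun j => (hx_norm j).trans (by linarith [min_le_right δ 1]))
      (fun j => (hy_norm j).trans one_le_two) _
      (fun j => norm_sub_inv_one_add_smul_le hs (hx_norm j))
  calc ‖P.eval x‖ ≤ ‖P.eval x - P.eval y‖ + ‖P.eval y‖ := norm_le_norm_sub_add _ _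
    _ ≤ max L 0 * δ + ‖P.eval T‖ := by
      gcongr
      calc ‖P.eval x - P.eval y‖ ≤ L * min δ 1 := hPxy
        _ ≤ max L 0 * min δ 1 := by gcongr; exact le_max_left _ _
        _ ≤ max L 0 * δ := by gcongr; exact min_le_left _ _
    _ < ‖P.eval T‖ + ε := by linarith

/-- For the universal `n`-tuple of self-adjoint contractions `T₁,…,Tₙ`:
for every noncommutative polynomial `P` and `ε > 0` there is `δ > 0` such that any `n`-tuple
of self-adjoint elements of norm at most `1 + δ` in any unital C*-algebra satisfies
`‖P(x₁,…,xₙ)‖ < ‖P(T₁,…,Tₙ)‖ + ε`. -/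
theorem universal_contractions_norm_bound {A : Type u} [NormedRing A] [NormedAlgebra ℂ A]
    [StarRing A] [CStarRing A] [CompleteSpace A] [StarModule ℂ A] {n : ℕ}
    (T : Fin n → A) (hsa : ∀ i, IsSelfAdjoint (T i)) (hT : ∀ i, ‖T i‖ ≤ 1)
    (hgen : (StarAlgebra.adjoin ℂ (Set.range T)).topologicalClosure = ⊤)
    (huniv : ∀ (B : Type v) [NormedRing B] [NormedAlgebra ℂ B] [StarRing B] [CStarRing B]
      [CompleteSpace B] [StarModule ℂ B] (x : Fin n → B),
      (∀ i, IsSelfAdjoint (x i)) → (∀ i, ‖x i‖ ≤ 1) →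
      ∃ φ : A →⋆ₐ[ℂ] B, ∀ i, φ (T i) = x i) :
    ∀ (P : NCPoly n) (ε : ℝ), 0 < ε → ∃ δ : ℝ, 0 < δ ∧
      ∀ (B : Type v) [NormedRing B] [NormedAlgebra ℂ B] [StarRing B] [CStarRing B]
        [CompleteSpace B] [StarModule ℂ B] (x : Fin n → B),
        (∀ j, IsSelfAdjoint (x j)) → (∀ j, ‖x j‖ ≤ 1 + δ) →
        ‖P.eval x‖ < ‖P.eval T‖ + ε :=
  universal_contractions_norm_bound_general T huniv
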